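/- Let ρ ≥ 2 and n ≥ 0, let f(n) := 2^{2^n}, and let P_n denote the product of all primes p with p < f(n+2). Every DFA over the alphabet Σ³ representing the set {(a,b,c) ∈ ℤ³ : 0 ≤ a,b,c < P_n and a·b = c} has at least 2^{⌊f(n+1)/(2·log₂ ρ)⌋} states. -/

import Mathlib

/-!
For `a, b < ρ^s`, the word `0 ⟨0, 0, a⟩` (sign digit, then `s` digits) followed by the
`(s+1)`-digit word of `(bρ, ρ^s, 0)` encodes `(bρ, ρ^s, aρ^(s+1))`, a product triple iff `a = b`.
All its entries are below `ρ^(2s+1)`, so once `ρ^(2s+1) ≤ P_n` these `ρ^s` prefixes form a fooling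
set and reach pairwise distinct states. Chebyshev's bound `θ(x) ≥ x log 2 - O(√x log x)` gives
`P_n ≥ 2^(2 f(n+1))` (checked by computation for `n ≤ 1`), and for `s = ⌊f(n+1)/(2 log₂ ρ)⌋ ≥ 1`
we have `ρ^(2s+1) ≤ ρ^(4s) ≤ 2^(2 f(n+1))`.
-/

namespace Presburger

/-- A letter of the alphabet `Σ^r`, where `Σ = {0, …, ρ-1}`. -/
abbrev Letter (ρ r : ℕ) := Fin r → Fin ρ

/-- The natural number encoded by a word over `Σ` (most significant digit first). -/
def natVal (ρ : ℕ) (w : List ℕ) : ℕ := w.foldl (fun acc b => ρ * acc + b) 0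

/-- The integer encoded by a nonempty word over `Σ` (ρ's complement,
most significant digit first); the empty word gets the junk value `0`. -/
def intVal (ρ : ℕ) : List ℕ → ℤ
  | [] => 0
  | b :: u => (natVal ρ u : ℤ) - (if b = 0 then 0 else (ρ : ℤ) ^ u.length)

/-- The tuple of natural numbers encoded track-wise by a word over `Σ^r` (as integers). -/
def natVec (ρ r : ℕ) (w : List (Letter ρ r)) : Fin r → ℤ :=
  fun i => (natVal ρ (w.map fun b => (b i : ℕ)) : ℤ)

/-- The tuple of integers encoded track-wise by a nonempty word over `Σ^r`. -/
def intVec (ρ r : ℕ) (w : List (Letter ρ r)) : Fin r → ℤ :=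
  fun i => intVal ρ (w.map fun b => (b i : ℕ))

/-- A language over `Σ^r` represents a set `U ⊆ ℤ^r` if it consists exactly of the
nonempty words encoding a member of `U`. -/
def Represents (ρ r : ℕ) (L : Language (Letter ρ r)) (U : Set (Fin r → ℤ)) : Prop :=
  ∀ w : List (Letter ρ r), w ∈ L ↔ (w ≠ [] ∧ intVec ρ r w ∈ U)

/-- A DFA represents `U ⊆ ℤ^r` if its accepted language does. -/
def DFARepresents (ρ r : ℕ) {σ : Type*} (M : DFA (Letter ρ r) σ) (U : Set (Fin r → ℤ)) : Prop :=
  Represents ρ r M.accepts U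

/-- Value of the homogeneous term with coefficients `k` at the point `a`. -/
def tval {r : ℕ} (k : Fin r → ℤ) (a : Fin r → ℤ) : ℤ := ∑ i, k i * a i

/-- A homogeneous term is `0` or has all its coefficients nonzero. -/
def Homog {r : ℕ} (k : Fin r → ℤ) : Prop := k = 0 ∨ ∀ i, k i ≠ 0

/-- `σ(b)`: componentwise `0` if the digit is `0` and `-1` otherwise. -/
def sgnLetter {ρ r : ℕ} (b : Letter ρ r) : Fin r → ℤ :=
  fun i => if (b i : ℕ) = 0 then 0 else -1

/-- The letter `b` viewed as a tuple of integers. -/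
def letterInt {ρ r : ℕ} (b : Letter ρ r) : Fin r → ℤ := fun i => ((b i : ℕ) : ℤ)

/-- `‖t‖⁺`: the sum of the positive coefficients of `t`. -/
def posNorm {r : ℕ} (k : Fin r → ℤ) : ℤ := ∑ i, max (k i) 0

/-- `‖t‖⁻`: the sum of the absolute values of the negative coefficients of `t`. -/
def negNorm {r : ℕ} (k : Fin r → ℤ) : ℤ := ∑ i, max (-k i) 0

/-- `gcd(t)`: the gcd of the absolute values of the coefficients of `t`. -/
def gcdT {r : ℕ} (k : Fin r → ℤ) : ℕ := Finset.univ.gcd fun i => (k i).natAbs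

/-- The transition function `η` of the infinite-state automaton for `t`,
restricted to the integer states: `η(q, b) = ρ·q + t[b]`. -/
def etaStep (ρ : ℕ) {r : ℕ} (k : Fin r → ℤ) (q : ℤ) (b : Letter ρ r) : ℤ :=
  ρ * q + tval k (letterInt b)

/-- The transition of `η` out of the initial state: `η(q_I, b) = t[σ(b)]`. -/
def etaInit (ρ : ℕ) {r : ℕ} (k : Fin r → ℤ) (b : Letter ρ r) : ℤ :=
  tval k (sgnLetter b)

/-- A state `q` is small (for `t ⋈ c`) if `q < min{c, -‖t‖⁺}`. -/
def IsSmall {r : ℕ} (k : Fin r → ℤ) (c q : ℤ) : Prop := q < min c (-posNorm k)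

/-- A state `q` is large (for `t ⋈ c`) if `q > max{c, ‖t‖⁻}`. -/
def IsLarge {r : ℕ} (k : Fin r → ℤ) (c q : ℤ) : Prop := max c (negNorm k) < q

/-- The six relations `=, ≠, <, ≤, >, ≥` on `ℤ`. -/
def rel6 : Set (ℤ → ℤ → Prop) :=
  {fun x y => x = y, fun x y => x ≠ y, fun x y => x < y,
   fun x y => x ≤ y, fun x y => x > y, fun x y => x ≥ y}

/-- Clamp an integer into the state set `{m, …, n}`; yields `none` (the initial state)
only in the degenerate case `m > n`, which never occurs for small `m` and large `n`. -/
noncomputable def clampSt (m n x : ℤ) : Option ↥(Finset.Icc m n) :=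
  if h : max m (min n x) ∈ Finset.Icc m n then some ⟨max m (min n x), h⟩ else none

/-- The DFA `A^{t ⋈ c}_{(m,n)}` for the (in)equation `t ⋈ c`: states are
`q_I = none` together with `{m, …, n}`, transitions clamp `η` to `[m, n]`, and the
accepting states are the integer states `q` with `q ⋈ c`. -/
noncomputable def ineqDFA (ρ : ℕ) {r : ℕ} (k : Fin r → ℤ) (m n : ℤ) (rel : ℤ → ℤ → Prop) (c : ℤ) :
    DFA (Letter ρ r) (Option ↥(Finset.Icc m n)) where
  step q b :=
    match q with
    | none => clampSt m n (etaInit ρ k b)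
    | some z => clampSt m n (etaStep ρ k z.val b)
  start := none
  accept := {q | ∃ z : ↥(Finset.Icc m n), q = some z ∧ rel z.val c}

/-- Two states of a DFA are equivalent if they accept exactly the same words. -/
def stEquiv {α : Type*} {σ : Type*} (M : DFA α σ) (p q : σ) : Prop :=
  ∀ w : List α, (M.evalFrom p w ∈ M.accept ↔ M.evalFrom q w ∈ M.accept)

end Presburger

namespace Presburger

/-- `f(n) = 2^{2^n}`. -/
def ff (n : ℕ) : ℕ := 2 ^ 2 ^ n

/-- `P_n`: the product of all primes `p < f(n+2)`. -/
def Pprod (n : ℕ) : ℕ := ∏ p ∈ Finset.filter Nat.Prime (Finset.range (ff (n + 2))), p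

end Presburger

theorem DFA.card_le_card_of_fooling {α σ ι : Type*} [Fintype σ] [Fintype ι] (M : DFA α σ)
    (u v : ι → List α) (huv : ∀ i j, u i ++ v j ∈ M.accepts ↔ i = j) :
    Fintype.card ι ≤ Fintype.card σ := by
  refine Fintype.card_le_of_injective (fun i => M.eval (u i)) fun i j hij => (huv i j).mp ?_
  have hj : u j ++ v j ∈ M.accepts := (huv j j).mpr rfl
  rw [DFA.mem_accepts, DFA.eval, DFA.evalFrom_of_append] at hj ⊢
  rwa [show M.evalFrom M.start (u i) = M.evalFrom M.start (u j) from hij]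

open Real in
theorem two_pow_two_mul_le_primorial {m : ℕ} (hm : 6 ≤ m) :
    2 ^ (2 * 2 ^ m) ≤ primorial (2 ^ (2 * m) - 1) := by
  set h := 2 ^ m with hh
  set x := 2 ^ (2 * m) - 1 with hx
  have h8m : (8 * m : ℝ) ≤ h := by
    have : 8 * m ≤ 2 ^ m := by
      induction m, hm using Nat.le_induction with
      | base => norm_num
      | succ m _ ih => rw [pow_succ]; omega
    exact_mod_cast this
  have hx1 : (x : ℝ) + 1 = (h : ℝ) ^ 2 := by
    rw [hx, hh, Nat.cast_sub Nat.one_le_two_pow]; push_cast; ring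
  have hx_pos : (1 : ℝ) ≤ x := by
    have : 2 ≤ 2 ^ (2 * m) := Nat.le_self_pow (by omega) 2
    exact_mod_cast (by omega : 1 ≤ x)
  have hlog : log (x + 1) = 2 * m * log 2 := by
    rw [hx1, hh]; push_cast; rw [← pow_mul, log_pow]; push_cast; ring
  have hlogx : log x ≤ 2 * m * log 2 := hlog ▸ log_le_log (by linarith) (by linarith)
  have hsqrt : √(x : ℝ) ≤ h := sqrt_le_left (by positivity) |>.mpr (by linarith)
  have herr : 2 * √x * log x ≤ 2 * h * (2 * m * log 2) := by gcongr
  have hx_large : 2 * h + 2 * m + 4 * h * m ≤ (x : ℝ) := by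
    have hm1 : (1 : ℝ) ≤ m := by exact_mod_cast (by omega : 1 ≤ m)
    nlinarith
  have htheta := Chebyshev.theta_ge x
  rw [Chebyshev.theta_eq_log_primorial, Nat.floor_natCast] at htheta
  rw [← Nat.cast_le (α := ℝ), ← log_le_log_iff (by positivity) (by exact_mod_cast primorial_pos _)]
  rw [Nat.cast_pow, log_pow]
  push_cast
  linarith [mul_le_mul_of_nonneg_right hx_large (log_pos one_lt_two).le]

theorem pow_le_two_pow_of_mul_logb_le {b m F : ℕ} (hb : 1 < b)
    (h : (m : ℝ) * Real.logb 2 b ≤ F) : b ^ m ≤ 2 ^ F := by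
  have hb' : (0 : ℝ) < b ^ m := by positivity
  rw [← Real.logb_pow, Real.logb_le_iff_le_rpow one_lt_two hb', Real.rpow_natCast] at h
  exact_mod_cast h

theorem pow_two_mul_floor_div_logb_le {b : ℕ} (hb : 1 < b) (F : ℕ) :
    b ^ (2 * ⌊(F : ℝ) / (2 * Real.logb 2 b)⌋.toNat) ≤ 2 ^ F := by
  apply pow_le_two_pow_of_mul_logb_le hb
  have hL : 0 < Real.logb 2 b := Real.logb_pos one_lt_two (by exact_mod_cast hb)
  have hs := Nat.floor_le (show 0 ≤ (F : ℝ) / (2 * Real.logb 2 b) by positivity)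
  rw [le_div_iff₀ (by positivity)] at hs
  rw [Int.floor_toNat]
  push_cast
  linarith

namespace Presburger

section Encoding

variable {ρ r : ℕ}

theorem natVal_append_singleton (w : List ℕ) (d : ℕ) :
    natVal ρ (w ++ [d]) = ρ * natVal ρ w + d := by
  simp [natVal, List.foldl_append]

theorem natVal_append (u v : List ℕ) :
    natVal ρ (u ++ v) = natVal ρ u * ρ ^ v.length + natVal ρ v := by
  induction v using List.reverseRecOn with
  | nil => simp [natVal]
  | append_singleton v d ih =>
    rw [← List.append_assoc, natVal_append_singleton, natVal_append_singleton, ih,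
      List.length_append, List.length_singleton, pow_succ]
    ring

theorem natVec_append (u v : List (Letter ρ r)) (i : Fin r) :
    natVec ρ r (u ++ v) i = natVec ρ r u i * ρ ^ v.length + natVec ρ r v i := by
  simp [natVec, natVal_append]

theorem intVec_zero_cons [NeZero ρ] (w : List (Letter ρ r)) :
    intVec ρ r (0 :: w) = natVec ρ r w := by
  funext i
  simp [intVec, intVal, natVec]

def digitsWord (ρ : ℕ) [NeZero ρ] : ℕ → (Fin r → ℕ) → List (Letter ρ r)
  | 0, _ => []
  | t + 1, x => digitsWord ρ t (fun i => x i / ρ) ++ [fun i => Fin.ofNat ρ (x i)]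

variable [NeZero ρ]

@[simp]
theorem length_digitsWord (t : ℕ) (x : Fin r → ℕ) : (digitsWord ρ t x).length = t := by
  induction t generalizing x with
  | zero => rfl
  | succ t ih => simp [digitsWord, ih]

theorem natVec_digitsWord (t : ℕ) (x : Fin r → ℕ) (i : Fin r) :
    natVec ρ r (digitsWord ρ t x) i = (x i % ρ ^ t : ℕ) := by
  rw [natVec, Nat.cast_inj]
  induction t generalizing x with
  | zero => simp [digitsWord, natVal, Nat.mod_one]
  | succ t ih =>
    rw [digitsWord, List.map_append, natVal_append, ih, pow_succ', Nat.mod_mul]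
    simp [natVal]
    ring

end Encoding

section Product

def mulTriples (P : ℕ) : Set (Fin 3 → ℤ) :=
  {a | (0 ≤ a 0 ∧ a 0 < (P : ℤ)) ∧ (0 ≤ a 1 ∧ a 1 < (P : ℤ)) ∧
       (0 ≤ a 2 ∧ a 2 < (P : ℤ)) ∧ a 0 * a 1 = a 2}

variable {ρ : ℕ} [NeZero ρ]

theorem intVec_zero_cons_digitsWord_append (hρ : 1 < ρ) {s a b : ℕ} (ha : a < ρ ^ s) (hb : b < ρ ^ s) :
    intVec ρ 3 ((0 :: digitsWord ρ s ![0, 0, a]) ++ digitsWord ρ (s + 1) ![b * ρ, ρ ^ s, 0]) =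
      ![(b * ρ : ℤ), ρ ^ s, a * ρ ^ (s + 1)] := by
  have hbρ : b * ρ < ρ ^ (s + 1) := by
    rw [pow_succ]; exact Nat.mul_lt_mul_of_pos_right hb (Nat.pos_of_neZero ρ)
  have hρs : ρ ^ s < ρ ^ (s + 1) := Nat.pow_lt_pow_right hρ s.lt_succ_self
  rw [List.cons_append, intVec_zero_cons]
  funext i
  rw [natVec_append, natVec_digitsWord, natVec_digitsWord, length_digitsWord]
  fin_cases i <;> simp [Nat.mod_eq_of_lt, ha, hbρ, hρs]

theorem pow_le_card_of_represents_mulTriples (hρ : 1 < ρ) {s P : ℕ} (hP : ρ ^ (2 * s + 1) ≤ P)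
    {σ : Type*} [Fintype σ] (M : DFA (Letter ρ 3) σ) (hM : DFARepresents ρ 3 M (mulTriples P)) :
    ρ ^ s ≤ Fintype.card σ := by
  have hρ0 : 0 < ρ := Nat.pos_of_neZero ρ
  have hlt {x : ℕ} (hx : x < ρ ^ (2 * s + 1)) : (x : ℤ) < P := by exact_mod_cast hx.trans_le hP
  rw [← Fintype.card_fin (ρ ^ s)]
  refine DFA.card_le_card_of_fooling M (fun a : Fin (ρ ^ s) => 0 :: digitsWord ρ s ![0, 0, a])
    (fun b => digitsWord ρ (s + 1) ![b * ρ, ρ ^ s, 0]) fun a b => ?_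
  have hb : ((b * ρ : ℕ) : ℤ) < P := hlt <| calc
    b * ρ < ρ ^ s * ρ := Nat.mul_lt_mul_of_pos_right b.isLt hρ0
    _ ≤ ρ ^ (2 * s + 1) := by rw [← pow_succ]; exact Nat.pow_le_pow_right hρ0 (by omega)
  have hρs : ((ρ ^ s : ℕ) : ℤ) < P := hlt (Nat.pow_lt_pow_right hρ (by omega))
  have ha : ((a * ρ ^ (s + 1) : ℕ) : ℤ) < P := hlt <| calc
    a * ρ ^ (s + 1) < ρ ^ s * ρ ^ (s + 1) := Nat.mul_lt_mul_of_pos_right a.isLt (by positivity)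
    _ = ρ ^ (2 * s + 1) := by rw [← pow_add]; ring_nf
  have hmul : (b * ρ * ρ ^ s : ℤ) = a * ρ ^ (s + 1) ↔ a = b := by
    rw [show (b * ρ * ρ ^ s : ℤ) = b * ρ ^ (s + 1) by ring, mul_left_inj' (by positivity),
      Nat.cast_inj, Fin.val_inj, eq_comm]
  push_cast at hb hρs ha
  rw [hM, intVec_zero_cons_digitsWord_append hρ a.isLt b.isLt]
  simp [mulTriples, hb, hρs, ha, hmul, mul_nonneg, pow_nonneg]

end Product

theorem Pprod_eq_primorial (n : ℕ) : Pprod n = primorial (ff (n + 2) - 1) := by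
  rw [Pprod, primorial, ff, Nat.sub_add_cancel Nat.one_le_two_pow]

theorem two_pow_two_mul_ff_le_Pprod : ∀ n, 2 ^ (2 * ff (n + 1)) ≤ Pprod n
  | 0 => by decide
  | 1 => by
    set_option maxRecDepth 10000 in decide
  | n + 2 => by
    rw [Pprod_eq_primorial, ff, ff, pow_succ' 2 (n + 3)]
    exact two_pow_two_mul_le_primorial <|
      (by norm_num : 6 ≤ 2 ^ 3).trans (Nat.pow_le_pow_right two_pos (by omega))

/-- Theorem `worst_case`.
Every DFA over the alphabet `Σ³` representing
`{(a,b,c) ∈ ℤ³ : 0 ≤ a,b,c < P_n, a·b = c}` (the set `⟦Prod_n⟧` defined by the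
Fischer–Rabin formulas) has at least `2^{⌊f(n+1)/(2·log₂ ρ)⌋}` states. -/
theorem stmt_18 (ρ : ℕ) (hρ : 2 ≤ ρ) (n : ℕ)
    (σ : Type*) [Fintype σ] (M : DFA (Letter ρ 3) σ)
    (hM : DFARepresents ρ 3 M
      {a | (0 ≤ a 0 ∧ a 0 < (Pprod n : ℤ)) ∧ (0 ≤ a 1 ∧ a 1 < (Pprod n : ℤ)) ∧
           (0 ≤ a 2 ∧ a 2 < (Pprod n : ℤ)) ∧ a 0 * a 1 = a 2}) :
    2 ^ (⌊(ff (n + 1) : ℝ) / (2 * Real.logb 2 ρ)⌋).toNat ≤ Fintype.card σ := by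
  have : NeZero ρ := ⟨by omega⟩
  set s := (⌊(ff (n + 1) : ℝ) / (2 * Real.logb 2 ρ)⌋).toNat
  rcases Nat.eq_zero_or_pos s with hs | hs
  · rw [hs, pow_zero]
    exact Fintype.card_pos_iff.mpr ⟨M.start⟩
  have hP : ρ ^ (2 * s + 1) ≤ Pprod n := calc
    ρ ^ (2 * s + 1) ≤ (ρ ^ (2 * s)) ^ 2 := by
      rw [← pow_mul]; exact Nat.pow_le_pow_right (by omega) (by omega)
    _ ≤ (2 ^ ff (n + 1)) ^ 2 := Nat.pow_le_pow_left (pow_two_mul_floor_div_logb_le hρ _) 2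
    _ = 2 ^ (2 * ff (n + 1)) := by rw [← pow_mul, mul_comm]
    _ ≤ Pprod n := two_pow_two_mul_ff_le_Pprod n
  calc 2 ^ s ≤ ρ ^ s := Nat.pow_le_pow_left hρ s
    _ ≤ Fintype.card σ := pow_le_card_of_represents_mulTriples hρ hP M hM

end Presburger
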